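/- arXiv:2205.04944 — 2 statements merged into one kernel-verified Lean document; each statement's English description precedes it below -/
import Mathlib

section
/- Let M be a real m × n matrix and W a real n × m matrix satisfying the Penrose conditions M W M = M and (W M)ᵀ = W M (as holds when W is a scalar multiple η M† of the Moore–Penrose pseudoinverse with the de-correlating step size). For a fixed y ∈ ℝ^m define the linear estimator f_LE(h; y) = h + W (y − M h) on ℝⁿ equipped with the Euclidean norm. If R : ℝⁿ → ℝⁿ is Lipschitz continuous with constant β where 0 ≤ β < 1, then the composed mapping h ↦ R(f_LE(h; y)) is Lipschitz continuous with constant β, hence contractive, and this holds for every y ∈ ℝ^m with the same constant β. -/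
open Matrix

lemma toEuclideanLin_mul_apply {k m n : ℕ} (A : Matrix (Fin k) (Fin m) ℝ)
    (B : Matrix (Fin m) (Fin n) ℝ) (x : EuclideanSpace ℝ (Fin n)) :
    Matrix.toEuclideanLin (A * B) x =
      Matrix.toEuclideanLin A (Matrix.toEuclideanLin B x) := by
  simp [Matrix.toEuclideanLin_apply, Matrix.mulVec_mulVec]

/-- If `R` is `β`-Lipschitz with `0 ≤ β < 1`, then the FPN-OAMP layer
`h ↦ R (h + W (y − M h))` is `β`-Lipschitz (hence contractive), uniformly in
`y`, for the de-correlated linear estimator. -/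
theorem fpn_oamp_layer_contractive
    {m n : ℕ} (M : Matrix (Fin m) (Fin n) ℝ) (W : Matrix (Fin n) (Fin m) ℝ)
    (hMWM : M * W * M = M) (hsymm : (W * M)ᵀ = W * M)
    (R : EuclideanSpace ℝ (Fin n) → EuclideanSpace ℝ (Fin n)) (β : ℝ)
    (hβ0 : 0 ≤ β) (hβ1 : β < 1)
    (hR : ∀ x₁ x₂ : EuclideanSpace ℝ (Fin n), ‖R x₁ - R x₂‖ ≤ β * ‖x₁ - x₂‖) :
    ∀ y : EuclideanSpace ℝ (Fin m), ∀ h₁ h₂ : EuclideanSpace ℝ (Fin n),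
      ‖R (h₁ + Matrix.toEuclideanLin W (y - Matrix.toEuclideanLin M h₁)) -
        R (h₂ + Matrix.toEuclideanLin W (y - Matrix.toEuclideanLin M h₂))‖ ≤
        β * ‖h₁ - h₂‖ := by
  intro y h₁ h₂
  set Q : Matrix (Fin n) (Fin n) ℝ := 1 - W * M with hQ
  -- Q is idempotent
  have hPP : (W * M) * (W * M) = W * M := by
    calc (W * M) * (W * M) = W * (M * W * M) := by simp only [Matrix.mul_assoc]
    _ = W * M := by rw [hMWM]
  have hQQ : Q * Q = Q := by
    simp only [hQ, Matrix.sub_mul, Matrix.mul_sub, Matrix.one_mul, Matrix.mul_one, hPP]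
    abel
  -- Q is symmetric
  have hQsymm : Qᵀ = Q := by
    simp [hQ, Matrix.transpose_sub, hsymm]
  have hQherm : Q.IsHermitian := by
    simpa [Matrix.IsHermitian] using hQsymm
  have hsym := Matrix.isHermitian_iff_isSymmetric.mp hQherm
  set L := Matrix.toEuclideanLin Q with hL
  set d : EuclideanSpace ℝ (Fin n) := h₁ - h₂ with hd
  -- ‖L d‖ ≤ ‖d‖
  have hLL : L (L d) = L d := by
    rw [hL, ← toEuclideanLin_mul_apply, hQQ]
  have hnorm : ‖L d‖ ≤ ‖d‖ := by
    rcases eq_or_ne (L d) 0 with h0 | h0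
    · simp [h0]
    · have h1 : (‖L d‖ : ℝ) ^ 2 = inner ℝ (L d) (L d) := by
        rw [real_inner_self_eq_norm_sq]
      have h2 : (inner ℝ (L d) (L d) : ℝ) = inner ℝ d (L (L d)) := hsym d (L d)
      have h3 : (inner ℝ d (L d) : ℝ) ≤ ‖d‖ * ‖L d‖ := real_inner_le_norm d (L d)
      have : ‖L d‖ ^ 2 ≤ ‖d‖ * ‖L d‖ := by
        rw [h1, h2, hLL]; exact h3
      have hpos : 0 < ‖L d‖ := norm_pos_iff.mpr h0
      nlinarith
  -- the arguments differ by L d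
  have hargs : (h₁ + Matrix.toEuclideanLin W (y - Matrix.toEuclideanLin M h₁)) -
      (h₂ + Matrix.toEuclideanLin W (y - Matrix.toEuclideanLin M h₂)) = L d := by
    have hone : ∀ x : EuclideanSpace ℝ (Fin n),
        Matrix.toEuclideanLin (1 : Matrix (Fin n) (Fin n) ℝ) x = x := by
      intro x
      simp [Matrix.toEuclideanLin_apply]
    have : L d = d - Matrix.toEuclideanLin (W * M) d := by
      rw [hL, hQ, map_sub Matrix.toEuclideanLin]
      simp [hone]
    rw [this, hd, toEuclideanLin_mul_apply]
    simp only [map_sub]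
    abel
  calc ‖R (h₁ + Matrix.toEuclideanLin W (y - Matrix.toEuclideanLin M h₁)) -
        R (h₂ + Matrix.toEuclideanLin W (y - Matrix.toEuclideanLin M h₂))‖
      ≤ β * ‖(h₁ + Matrix.toEuclideanLin W (y - Matrix.toEuclideanLin M h₁)) -
        (h₂ + Matrix.toEuclideanLin W (y - Matrix.toEuclideanLin M h₂))‖ := hR _ _
    _ = β * ‖L d‖ := by rw [hargs]
    _ ≤ β * ‖d‖ := by exact mul_le_mul_of_nonneg_left hnorm hβ0
end

section
/- Let M ∈ ℝ^{m×n} and W ∈ ℝ^{n×m} satisfy M W M = M and (W M)ᵀ = W M, and let R : ℝⁿ → ℝⁿ be Lipschitz continuous with constant β where 0 ≤ β < 1 (with respect to the Euclidean norm). Fix y ∈ ℝ^m and define the FPN-OAMP iteration h^{t+1} = R(h^t + W(y − M h^t)) started from h⁰ = 0. Then the iteration converges to the unique fixed point ĥ ∈ ℝⁿ of the mapping h ↦ R(h + W(y − M h)), and the estimation error satisfies ‖h^t − ĥ‖₂ ≤ β^t · ‖ĥ‖₂ for all t ≥ 0; the linear convergence rate β is independent of y, hence holds uniformly over all channel conditions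 and SNR levels encoded in y. -/
open Matrix

/-- FPN-OAMP convergence: started from `h⁰ = 0`, the iteration
`h^{t+1} = R (h^t + W (y − M h^t))` converges to the unique fixed point `ĥ`
with linear rate `β` independent of `y`: `‖h^t − ĥ‖ ≤ β^t ‖ĥ‖`. -/
theorem fpn_oamp_linear_convergence
    {m n : ℕ} (M : Matrix (Fin m) (Fin n) ℝ) (W : Matrix (Fin n) (Fin m) ℝ)
    (hMWM : M * W * M = M) (hsymm : (W * M)ᵀ = W * M)
    (R : EuclideanSpace ℝ (Fin n) → EuclideanSpace ℝ (Fin n)) (β : ℝ)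
    (hβ0 : 0 ≤ β) (hβ1 : β < 1)
    (hR : ∀ x₁ x₂ : EuclideanSpace ℝ (Fin n), ‖R x₁ - R x₂‖ ≤ β * ‖x₁ - x₂‖)
    (y : EuclideanSpace ℝ (Fin m)) :
    ∃ hhat : EuclideanSpace ℝ (Fin n),
      R (hhat + Matrix.toEuclideanLin W (y - Matrix.toEuclideanLin M hhat)) = hhat ∧
      (∀ h' : EuclideanSpace ℝ (Fin n),
        R (h' + Matrix.toEuclideanLin W (y - Matrix.toEuclideanLin M h')) = h' → h' = hhat) ∧
      Filter.Tendsto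
        (fun t : ℕ =>
          (fun h => R (h + Matrix.toEuclideanLin W (y - Matrix.toEuclideanLin M h)))^[t]
            (0 : EuclideanSpace ℝ (Fin n)))
        Filter.atTop (nhds hhat) ∧
      (∀ t : ℕ,
        ‖(fun h => R (h + Matrix.toEuclideanLin W (y - Matrix.toEuclideanLin M h)))^[t]
            (0 : EuclideanSpace ℝ (Fin n)) - hhat‖ ≤ β ^ t * ‖hhat‖) := by
  have hmul : (W * M) * (W * M) = W * (M * W * M) := by
    rw [Matrix.mul_assoc, Matrix.mul_assoc]
  set P : EuclideanSpace ℝ (Fin n) →ₗ[ℝ] EuclideanSpace ℝ (Fin n) := Matrix.toEuclideanLin (W * M) with hP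
  -- idempotency of W*M
  have hmat : (W * M) * (W * M) = W * M := by
    rw [hmul, hMWM]
  have hPP : ∀ x : EuclideanSpace ℝ (Fin n), P (P x) = P x := by
    intro x
    simp only [hP, Matrix.toEuclideanLin_apply, Equiv.apply_symm_apply,
      Matrix.mulVec_mulVec, hmat]
  -- symmetry
  have hsym : ∀ x z : EuclideanSpace ℝ (Fin n), (inner ℝ (P x) z : ℝ) = inner ℝ x (P z) := by
    intro x z
    simp only [hP, EuclideanSpace.inner_eq_star_dotProduct, Matrix.toEuclideanLin_apply,
      Equiv.apply_symm_apply, star_trivial]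
    rw [dotProduct_mulVec, ← Matrix.mulVec_transpose, hsymm, dotProduct_comm,
      dotProduct_mulVec, ← Matrix.mulVec_transpose, hsymm, dotProduct_comm]
  -- the complementary projection is 1-Lipschitz
  have hQ : ∀ x : EuclideanSpace ℝ (Fin n), ‖x - P x‖ ≤ ‖x‖ := by
    intro x
    set q : EuclideanSpace ℝ (Fin n) := x - P x with hq
    have hQQ : P q = 0 := by
      simp only [hq, map_sub, hPP, sub_self]
    have key : (inner ℝ q q : ℝ) = inner ℝ q x := by
      have : (inner ℝ q x : ℝ) - inner ℝ q q = inner ℝ q (P x) := by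
        rw [← inner_sub_right]
        congr 1
        simp [hq]
      have h2 : (inner ℝ q (P x) : ℝ) = 0 := by
        rw [← hsym, hQQ, inner_zero_left]
      linarith [this, h2]
    have : ‖q‖ ^ 2 ≤ ‖q‖ * ‖x‖ := by
      rw [← real_inner_self_eq_norm_sq, key]
      exact real_inner_le_norm q x
    rcases eq_or_lt_of_le (norm_nonneg q) with h | h
    · rw [← h]; exact norm_nonneg x
    · nlinarith
  -- the iteration map
  set T : EuclideanSpace ℝ (Fin n) → EuclideanSpace ℝ (Fin n) := fun h => R (h + Matrix.toEuclideanLin W (y - Matrix.toEuclideanLin M h))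
    with hT
  have hTlip : ∀ a b : EuclideanSpace ℝ (Fin n), ‖T a - T b‖ ≤ β * ‖a - b‖ := by
    intro a b
    have hlin : (a + Matrix.toEuclideanLin W (y - Matrix.toEuclideanLin M a)) -
        (b + Matrix.toEuclideanLin W (y - Matrix.toEuclideanLin M b)) =
        (a - b) - P (a - b) := by
      have hWM : ∀ v : EuclideanSpace ℝ (Fin n), Matrix.toEuclideanLin W (Matrix.toEuclideanLin M v) = P v := by
        intro v
        simp only [hP, Matrix.toEuclideanLin_apply, Equiv.apply_symm_apply,
          Matrix.mulVec_mulVec]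
      simp only [map_sub]
      rw [← hWM a, ← hWM b]
      abel
    calc ‖T a - T b‖ ≤ β * ‖(a + Matrix.toEuclideanLin W (y - Matrix.toEuclideanLin M a)) -
          (b + Matrix.toEuclideanLin W (y - Matrix.toEuclideanLin M b))‖ := hR _ _
      _ ≤ β * ‖a - b‖ := by
          rw [hlin]
          exact mul_le_mul_of_nonneg_left (hQ (a - b)) hβ0
  have hcontr : ContractingWith ⟨β, hβ0⟩ T := by
    constructor
    · exact_mod_cast hβ1
    · apply LipschitzWith.of_dist_le_mul
      intro a b
      rw [dist_eq_norm, dist_eq_norm]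
      exact hTlip a b
  refine ⟨hcontr.fixedPoint T, hcontr.fixedPoint_isFixedPt, ?_, ?_, ?_⟩
  · intro h' hh'
    exact hcontr.fixedPoint_unique hh'
  · exact hcontr.tendsto_iterate_fixedPoint 0
  · intro t
    induction t with
    | zero => simp
    | succ t ih =>
      rw [Function.iterate_succ_apply']
      have hfp : T (hcontr.fixedPoint T) = hcontr.fixedPoint T := hcontr.fixedPoint_isFixedPt
      calc ‖T (T^[t] 0) - hcontr.fixedPoint T‖
          = ‖T (T^[t] 0) - T (hcontr.fixedPoint T)‖ := by rw [hfp]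
        _ ≤ β * ‖T^[t] 0 - hcontr.fixedPoint T‖ := hTlip _ _
        _ ≤ β * (β ^ t * ‖hcontr.fixedPoint T‖) := mul_le_mul_of_nonneg_left ih hβ0
        _ = β ^ (t + 1) * ‖hcontr.fixedPoint T‖ := by ring
end
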